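/- arXiv:2406.19269 — 4 statements merged into one kernel-verified Lean document; each statement's English description precedes it below -/
import Mathlib

section
/- A mean demand vector d̄ ∈ ℝ_{≥0}^M is feasible — i.e., there exists a sequence of admissible phases S(t) ∈ 𝒮 whose long-run activation frequencies S̄_m = lim_{T→∞} (1/T) Σ_{t=0}^{T−1} S_m(t) exist and satisfy d̄_m ≤ S̄_m c_m for all m ∈ M — if and only if there exists a matrix Σ in the convex hull of 𝒮 such that d̄_m ≤ Σ_m c_m for all m ∈ M. -/
open Filter Finset


lemma freq_realize : ∀ (k : ℕ) (lam : Fin k → ℝ), (∀ i, 0 ≤ lam i) → (∑ i, lam i) = 1 →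
    ∃ σ : ℕ → Fin k, ∀ i, Filter.Tendsto
      (fun T : ℕ => (1 / (T:ℝ)) * ((Finset.range T).filter (fun t => σ t = i)).card)
      Filter.atTop (nhds (lam i)) := by
  intro k
  induction k with
  | zero => intro lam _ hsum; simp at hsum
  | succ k ih =>
    intro lam hpos hsum
    have hone : Tendsto (fun T : ℕ => (1 / (T:ℝ)) * ((Finset.range T).filter
        (fun t => (fun _ : ℕ => (0 : Fin (k+1))) t = (0 : Fin (k+1)))).card)
        atTop (nhds 1) := by
      have : ∀ T : ℕ, 1 ≤ T → (1 / (T:ℝ)) * ((Finset.range T).filter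
          (fun t => (fun _ : ℕ => (0 : Fin (k+1))) t = (0 : Fin (k+1)))).card = 1 := by
        intro T hT
        rw [Finset.filter_true_of_mem (fun t _ => rfl), card_range]
        have : (T:ℝ) ≠ 0 := by positivity
        field_simp
      refine Tendsto.congr' ?_ tendsto_const_nhds
      filter_upwards [eventually_ge_atTop 1] with T hT
      exact (this T hT).symm
    have hLle : lam 0 ≤ 1 := by
      rw [← hsum]
      exact Finset.single_le_sum (fun i _ => hpos i) (mem_univ 0)
    have hL0 : 0 ≤ lam 0 := hpos 0
    rcases eq_or_lt_of_le hLle with heq | hlt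
    · -- lam 0 = 1, all others are zero
      refine ⟨fun _ => 0, ?_⟩
      have hrest : ∀ j : Fin k, lam j.succ = 0 := by
        have h1 : ∑ j : Fin k, lam j.succ = 0 := by
          have := Fin.sum_univ_succ lam
          rw [hsum, ← heq] at this
          linarith
        intro j
        have := (Finset.sum_eq_zero_iff_of_nonneg (fun i _ => hpos i.succ)).1 h1 j (mem_univ j)
        exact this
      intro i
      induction i using Fin.cases with
      | zero => rw [← heq] at hone ⊢; exact hone
      | succ j =>
        rw [hrest j]
        have : ∀ T : ℕ, (1 / (T:ℝ)) * ((Finset.range T).filter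
            (fun t => (fun _ : ℕ => (0 : Fin (k+1))) t = j.succ)).card = 0 := by
          intro T
          rw [Finset.filter_false_of_mem, Finset.card_empty]
          · simp
          · intro t _
            exact (Fin.succ_ne_zero j).symm
        have hz : Tendsto (fun _ : ℕ => (0:ℝ)) atTop (nhds 0) := tendsto_const_nhds
        exact hz.congr (fun T => (this T).symm)
    · -- lam 0 < 1
      set lam0 := lam 0 with hlam0def
      set F : ℕ → ℕ := fun T => ⌊(T:ℝ) * lam0⌋₊ with hF
      have hF0 : F 0 = 0 := by simp [hF]
      have hFle : ∀ T, F T ≤ T := by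
        intro T
        have : (T:ℝ) * lam0 ≤ T := by nlinarith [Nat.cast_nonneg (α := ℝ) T]
        calc F T ≤ ⌊(T:ℝ)⌋₊ := Nat.floor_le_floor this
        _ = T := Nat.floor_natCast T
      have hFstep : ∀ T, F (T+1) = F T ∨ F (T+1) = F T + 1 := by
        intro T
        have h1 : F T ≤ F (T+1) := by
          apply Nat.floor_le_floor
          have hcast : ((T:ℕ):ℝ) ≤ ((T+1:ℕ):ℝ) := by exact_mod_cast Nat.le_succ T
          nlinarith
        have h2 : F (T+1) ≤ F T + 1 := by
          have : ((T:ℕ)+1:ℝ) * lam0 ≤ (T:ℝ) * lam0 + 1 := by nlinarith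
          calc F (T+1) ≤ ⌊(T:ℝ) * lam0 + 1⌋₊ := by
                apply Nat.floor_le_floor; push_cast; linarith
          _ = F T + 1 := Nat.floor_add_one (by positivity)
        omega
      set lam' : Fin k → ℝ := fun i => lam i.succ / (1 - lam0) with hlam'
      have hpos' : ∀ i, 0 ≤ lam' i := fun i => div_nonneg (hpos i.succ) (by linarith)
      have hsum' : ∑ i, lam' i = 1 := by
        rw [hlam']
        rw [← Finset.sum_div]
        have h1 : ∑ j : Fin k, lam j.succ = 1 - lam0 := by
          have := Fin.sum_univ_succ lam
          rw [hsum] at this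
          linarith
        rw [h1]
        exact div_self (by linarith)
      obtain ⟨σ', hσ'⟩ := ih lam' hpos' hsum'
      set σ : ℕ → Fin (k+1) := fun t => if F (t+1) = F t + 1 then 0 else (σ' (t - F t)).succ
        with hσdef
      -- counting lemmas
      have count0 : ∀ T, ((range T).filter (fun t => σ t = 0)).card = F T := by
        intro T
        induction T with
        | zero => simp [hF0]
        | succ T ihT =>
          rw [Finset.range_add_one, Finset.filter_insert]
          rcases hFstep T with h | h
          · rw [if_neg, ihT, h]
            simp only [hσdef]
            rw [if_neg (by omega)]
            exact Fin.succ_ne_zero _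
          · rw [if_pos, Finset.card_insert_of_notMem (by simp), ihT, h]
            simp only [hσdef]
            rw [if_pos h]
      have countsucc : ∀ (i : Fin k) T, ((range T).filter (fun t => σ t = i.succ)).card
          = ((range (T - F T)).filter (fun s => σ' s = i)).card := by
        intro i T
        induction T with
        | zero => simp [hF0]
        | succ T ihT =>
          rw [Finset.range_add_one, Finset.filter_insert]
          rcases hFstep T with h | h
          · have harith : T + 1 - F (T+1) = (T - F T) + 1 := by
              have := hFle T; omega
            rw [harith, Finset.range_add_one, Finset.filter_insert]
            have hσT : σ T = (σ' (T - F T)).succ := by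
              simp only [hσdef]; rw [if_neg (by omega)]
            by_cases hc : σ' (T - F T) = i
            · rw [if_pos (by rw [hσT, hc]), if_pos hc,
                Finset.card_insert_of_notMem (by simp),
                Finset.card_insert_of_notMem (by simp), ihT]
            · rw [if_neg (by rw [hσT]; exact fun hh => hc (Fin.succ_inj.1 hh)), if_neg hc, ihT]
          · have harith : T + 1 - F (T+1) = T - F T := by
              have := hFle T; omega
            rw [harith, if_neg, ihT]
            simp only [hσdef]
            rw [if_pos h]
            exact (Fin.succ_ne_zero i).symm
      refine ⟨σ, ?_⟩
      -- limit for F T / T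
      have hfloor : Tendsto (fun T : ℕ => (F T : ℝ) / T) atTop (nhds lam0) := by
        have h1 := tendsto_nat_floor_mul_div_atTop (R := ℝ) hL0
        have h2 := h1.comp tendsto_natCast_atTop_atTop (α := ℕ)
        refine h2.congr ?_
        intro T
        simp only [Function.comp, hF, mul_comm]
      intro i
      induction i using Fin.cases with
      | zero =>
        refine hfloor.congr ?_
        intro T
        rw [count0 T, one_div, inv_mul_eq_div]
      | succ j =>
        set T' : ℕ → ℕ := fun T => T - F T with hT'
        have hT'cast : ∀ T, (T' T : ℝ) = (T:ℝ) - F T := by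
          intro T
          simp only [hT']
          rw [Nat.cast_sub (hFle T)]
        have hT'top : Tendsto T' atTop atTop := by
          rw [← tendsto_natCast_atTop_iff (R := ℝ)]
          have hb : Tendsto (fun T : ℕ => (1 - lam0) * T) atTop atTop :=
            Tendsto.const_mul_atTop (by linarith) tendsto_natCast_atTop_atTop
          apply tendsto_atTop_mono _ hb
          intro T
          rw [hT'cast]
          have : (F T : ℝ) ≤ (T:ℝ) * lam0 := Nat.floor_le (by positivity)
          nlinarith
        have hratio : Tendsto (fun T : ℕ => (T' T : ℝ) / T) atTop (nhds (1 - lam0)) := by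
          have : Tendsto (fun T : ℕ => 1 - (F T : ℝ) / T) atTop (nhds (1 - lam0)) :=
            tendsto_const_nhds.sub hfloor
          refine this.congr' ?_
          filter_upwards [eventually_gt_atTop 0] with T hT
          rw [hT'cast, sub_div, div_self (by positivity)]
        have hcomp : Tendsto (fun T : ℕ => (1 / (T' T : ℝ)) *
            ((range (T' T)).filter (fun s => σ' s = j)).card) atTop (nhds (lam' j)) :=
          (hσ' j).comp hT'top
        have hmul := hcomp.mul hratio
        have hval : lam' j * (1 - lam0) = lam j.succ := by
          rw [hlam']
          exact div_mul_cancel₀ _ (by linarith : (1:ℝ) - lam0 ≠ 0)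
        rw [hval] at hmul
        refine hmul.congr ?_
        intro T
        rw [countsucc j T]
        by_cases h0 : T' T = 0
        · simp only [h0]
          have hTF : T - F T = 0 := h0
          rw [hTF]
          simp
        · have hTne : (T:ℝ) ≠ 0 := by
            have : T ≠ 0 := by
              intro hT0
              apply h0
              simp [hT', hT0, hF0]
            exact_mod_cast this
          have hT'ne : (T' T : ℝ) ≠ 0 := Nat.cast_ne_zero.2 h0
          field_simp
          rfl



/-- A mean demand vector `d̄ ∈ ℝ_{≥0}^M` is feasible — i.e. there is a
sequence of admissible phases `S(t) ∈ 𝒮` whose long-run activation frequencies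
`S̄_m = lim_{T→∞} (1/T) ∑_{t=0}^{T−1} S_m(t)` exist and satisfy `d̄_m ≤ S̄_m c_m` for
all `m` — if and only if there exists `Σ` in the convex hull of `𝒮` with
`d̄_m ≤ Σ_m c_m` for all `m`. -/
theorem feasible_iff_convexHull {M : Type*} [Fintype M]
    (𝒮 : Finset (M → ℝ))
    (h01 : ∀ S ∈ 𝒮, ∀ m, S m = 0 ∨ S m = 1)
    (c dbar : M → ℝ) (hc : ∀ m, 0 ≤ c m) (hdbar : ∀ m, 0 ≤ dbar m) :
    (∃ S : ℕ → (M → ℝ), (∀ t, S t ∈ 𝒮) ∧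
      ∃ Sbar : M → ℝ,
        (∀ m, Filter.Tendsto
          (fun T : ℕ => (1 / (T : ℝ)) * ∑ t ∈ Finset.range T, S t m)
          Filter.atTop (nhds (Sbar m))) ∧
        ∀ m, dbar m ≤ Sbar m * c m)
    ↔ ∃ Sig ∈ convexHull ℝ (𝒮 : Set (M → ℝ)), ∀ m, dbar m ≤ Sig m * c m := by
  constructor
  · rintro ⟨S, hS, Sbar, hlim, hle⟩
    refine ⟨Sbar, ?_, hle⟩
    set A : ℕ → (M → ℝ) := fun T => (1/(T:ℝ)) • ∑ t ∈ Finset.range T, S t with hA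
    have hAmem : ∀ T : ℕ, 1 ≤ T → A T ∈ convexHull ℝ (𝒮 : Set (M → ℝ)) := by
      intro T hT
      have hmem := Finset.centerMass_mem_convexHull (Finset.range T)
        (w := fun _ => (1:ℝ)) (fun i _ => zero_le_one)
        (by
          rw [Finset.sum_const, Finset.card_range, nsmul_eq_mul, mul_one]
          exact_mod_cast hT)
        (z := S) (fun t _ => hS t)
      have hAeq : (Finset.range T).centerMass (fun _ => (1:ℝ)) S = A T := by
        simp [Finset.centerMass, Finset.sum_const, Finset.card_range, one_div, hA]
      rwa [hAeq] at hmem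
    have htend : Filter.Tendsto A Filter.atTop (nhds Sbar) := by
      rw [tendsto_pi_nhds]
      intro m
      refine (hlim m).congr ?_
      intro T
      simp [hA, Finset.sum_apply]
    exact (Set.Finite.isClosed_convexHull ℝ 𝒮.finite_toSet).mem_of_tendsto htend
      (Filter.eventually_atTop.2 ⟨1, hAmem⟩)
  · rintro ⟨Sig, hSig, hle⟩
    rw [Finset.convexHull_eq] at hSig
    obtain ⟨w, hw0, hw1, hwc⟩ := hSig
    set k := 𝒮.card with hk
    set e := 𝒮.equivFin with he
    set lam : Fin k → ℝ := fun i => w (e.symm i) with hlam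
    set v : Fin k → (M → ℝ) := fun i => (e.symm i : M → ℝ) with hv
    have hlampos : ∀ i, 0 ≤ lam i := fun i => hw0 _ (e.symm i).2
    have hsumeq : ∀ f : (M → ℝ) → ℝ, ∑ i : Fin k, f (e.symm i) = ∑ y ∈ 𝒮, f y := by
      intro f
      rw [← Finset.sum_coe_sort 𝒮 f]
      exact Equiv.sum_comp e.symm (fun a : {x // x ∈ 𝒮} => f a)
    have hlamsum : ∑ i, lam i = 1 := by
      rw [hlam]
      rw [hsumeq w]
      exact hw1
    obtain ⟨σ, hσ⟩ := freq_realize k lam hlampos hlamsum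
    refine ⟨fun t => v (σ t), fun t => (e.symm (σ t)).2, Sig, ?_, hle⟩
    intro m
    have hSm : Sig m = ∑ i : Fin k, lam i * v i m := by
      have hcm : 𝒮.centerMass w id = ∑ y ∈ 𝒮, w y • y := by
        rw [Finset.centerMass, hw1, inv_one, one_smul]
        rfl
      have h1 : Sig m = ∑ y ∈ 𝒮, w y * y m := by
        rw [← hwc, hcm, Finset.sum_apply]
        rfl
      rw [h1, ← hsumeq (fun y => w y * y m)]
    rw [hSm]
    have htend : Filter.Tendsto (fun T : ℕ => ∑ i : Fin k,
        ((1/(T:ℝ)) * ((Finset.range T).filter (fun t => σ t = i)).card) * v i m)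
        Filter.atTop (nhds (∑ i : Fin k, lam i * v i m)) :=
      tendsto_finset_sum _ (fun i _ => (hσ i).mul_const (v i m))
    refine htend.congr ?_
    intro T
    have h2 : ∑ t ∈ Finset.range T, v (σ t) m
        = ∑ i : Fin k, (((Finset.range T).filter (fun t => σ t = i)).card : ℝ) * v i m := by
      rw [← Finset.sum_fiberwise (Finset.range T) σ (fun t => v (σ t) m)]
      refine Finset.sum_congr rfl (fun i _ => ?_)
      have hcongr : ∑ t ∈ (Finset.range T).filter (fun t => σ t = i), v (σ t) m
          = ∑ t ∈ (Finset.range T).filter (fun t => σ t = i), v i m :=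
        Finset.sum_congr rfl (fun t ht => by rw [(Finset.mem_filter.1 ht).2])
      rw [hcongr, Finset.sum_const, nsmul_eq_mul]
    rw [h2, Finset.mul_sum]
    refine Finset.sum_congr rfl (fun i _ => ?_)
    ring
end

section
/- Let 𝒮 ⊆ ℝ^M be a finite set with M finite. For every point Σ in the convex hull of 𝒮 there exists a sequence S : ℕ → 𝒮 whose Cesàro averages converge to Σ, i.e., (1/T) Σ_{t=0}^{T−1} S_m(t) → Σ_m as T → ∞ for every m ∈ M. -/
open Filter Finset

/-- Key counting identity: splitting a "mixed" sum into the constant part and the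
subsequence part, proved by induction on `T`. -/
lemma cesaro_sum_split (w : ℝ) (hw0 : 0 ≤ w) (hw1 : w ≤ 1) (c : ℝ) (f : ℕ → ℝ) :
    ∀ T : ℕ, (∑ t ∈ Finset.range T,
        (if ⌊w * ((t : ℝ) + 1)⌋₊ > ⌊w * (t : ℝ)⌋₊ then c else f (t - ⌊w * (t : ℝ)⌋₊)))
      = (⌊w * (T : ℝ)⌋₊ : ℝ) * c + ∑ s ∈ Finset.range (T - ⌊w * (T : ℝ)⌋₊), f s := by
  intro T
  induction T with
  | zero => simp
  | succ T ih =>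
    have hcle : ⌊w * (T : ℝ)⌋₊ ≤ T := by
      calc ⌊w * (T : ℝ)⌋₊ ≤ ⌊(T : ℝ)⌋₊ := Nat.floor_le_floor (by nlinarith [Nat.cast_nonneg (α := ℝ) T])
        _ = T := Nat.floor_natCast T
    have hstep : ⌊w * ((T : ℝ) + 1)⌋₊ ≤ ⌊w * (T : ℝ)⌋₊ + 1 := by
      have h1 : w * ((T : ℝ) + 1) ≤ w * (T : ℝ) + 1 := by nlinarith
      calc ⌊w * ((T : ℝ) + 1)⌋₊ ≤ ⌊w * (T : ℝ) + 1⌋₊ := Nat.floor_le_floor h1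
        _ = ⌊w * (T : ℝ)⌋₊ + 1 := Nat.floor_add_one (by positivity)
    have hmono : ⌊w * (T : ℝ)⌋₊ ≤ ⌊w * ((T : ℝ) + 1)⌋₊ :=
      Nat.floor_le_floor (by nlinarith)
    rw [Finset.sum_range_succ, ih]
    have hcast : ((T + 1 : ℕ) : ℝ) = (T : ℝ) + 1 := by push_cast; ring
    by_cases h : ⌊w * ((T : ℝ) + 1)⌋₊ > ⌊w * (T : ℝ)⌋₊
    · have heq : ⌊w * ((T : ℝ) + 1)⌋₊ = ⌊w * (T : ℝ)⌋₊ + 1 := le_antisymm hstep h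
      rw [if_pos h, hcast, heq]
      have hsub : T + 1 - (⌊w * (T : ℝ)⌋₊ + 1) = T - ⌊w * (T : ℝ)⌋₊ := by omega
      rw [hsub]
      push_cast
      ring
    · have heq : ⌊w * ((T : ℝ) + 1)⌋₊ = ⌊w * (T : ℝ)⌋₊ := le_antisymm (not_lt.mp h) hmono
      rw [if_neg h, hcast, heq]
      have hsub : T + 1 - ⌊w * (T : ℝ)⌋₊ = (T - ⌊w * (T : ℝ)⌋₊) + 1 := by omega
      rw [hsub, Finset.sum_range_succ]
      ring

/-- Mixing lemma: given a sequence with Cesàro limit `z` and a point `x`, we can mix them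
with weights `w`, `1 - w`. -/
lemma cesaro_mix {M : Type*} (x : M → ℝ) (S' : ℕ → M → ℝ) (z : M → ℝ) (w : ℝ)
    (hw0 : 0 ≤ w) (hw1 : w < 1)
    (hS' : ∀ m, Filter.Tendsto
      (fun T : ℕ => (1 / (T : ℝ)) * ∑ t ∈ Finset.range T, S' t m)
      Filter.atTop (nhds (z m))) :
    ∃ S : ℕ → M → ℝ, (∀ t, S t = x ∨ ∃ s, S t = S' s) ∧
      ∀ m, Filter.Tendsto
        (fun T : ℕ => (1 / (T : ℝ)) * ∑ t ∈ Finset.range T, S t m)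
        Filter.atTop (nhds (w * x m + (1 - w) * z m)) := by
  have hw1' : w ≤ 1 := le_of_lt hw1
  refine ⟨fun t => if ⌊w * ((t : ℝ) + 1)⌋₊ > ⌊w * (t : ℝ)⌋₊ then x
      else S' (t - ⌊w * (t : ℝ)⌋₊), fun t => ?_, fun m => ?_⟩
  · by_cases h : ⌊w * ((t : ℝ) + 1)⌋₊ > ⌊w * (t : ℝ)⌋₊
    · left; simp [h]
    · right; exact ⟨t - ⌊w * (t : ℝ)⌋₊, by simp [h]⟩
  · -- limit computation
    set c : ℕ → ℕ := fun T => ⌊w * (T : ℝ)⌋₊ with hc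
    set N : ℕ → ℕ := fun T => T - c T with hN
    have hcleT : ∀ T : ℕ, c T ≤ T := by
      intro T
      calc ⌊w * (T : ℝ)⌋₊ ≤ ⌊(T : ℝ)⌋₊ := Nat.floor_le_floor (by nlinarith [Nat.cast_nonneg (α := ℝ) T])
        _ = T := Nat.floor_natCast T
    -- (c T : ℝ)/T → w
    have h1 : Filter.Tendsto (fun T : ℕ => (c T : ℝ) / T) Filter.atTop (nhds w) :=
      (tendsto_nat_floor_mul_div_atTop hw0).comp tendsto_natCast_atTop_atTop
    -- N tends to atTop
    have hNcast : ∀ T : ℕ, (N T : ℝ) = (T : ℝ) - (c T : ℝ) := by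
      intro T; rw [hN]; push_cast [Nat.cast_sub (hcleT T)]; ring
    have hNlow : ∀ T : ℕ, (1 - w) * (T : ℝ) ≤ (N T : ℝ) := by
      intro T
      have := Nat.floor_le (by positivity : (0:ℝ) ≤ w * (T : ℝ))
      rw [hNcast T]
      have : (c T : ℝ) ≤ w * T := this
      nlinarith
    have hNtopR : Filter.Tendsto (fun T : ℕ => (N T : ℝ)) Filter.atTop Filter.atTop := by
      apply Filter.tendsto_atTop_mono hNlow
      exact (tendsto_natCast_atTop_atTop (R := ℝ)).const_mul_atTop (by linarith)
    have hNtop : Filter.Tendsto N Filter.atTop Filter.atTop :=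
      tendsto_natCast_atTop_iff.mp hNtopR
    -- N T / T → 1 - w
    have h2 : Filter.Tendsto (fun T : ℕ => (N T : ℝ) / T) Filter.atTop (nhds (1 - w)) := by
      have hsub : Filter.Tendsto (fun T : ℕ => (T : ℝ) / T - (c T : ℝ) / T)
          Filter.atTop (nhds (1 - w)) := by
        have hTT : Filter.Tendsto (fun T : ℕ => (T : ℝ) / T) Filter.atTop (nhds 1) := by
          apply Filter.Tendsto.congr' _ tendsto_const_nhds
          filter_upwards [Filter.eventually_atTop.2 ⟨1, fun T hT => hT⟩] with T hT
          have : (T : ℝ) ≠ 0 := by positivity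
          field_simp
        simpa using hTT.sub h1
      apply hsub.congr
      intro T
      rw [hNcast T, sub_div]
    -- composed Cesàro limit of S'
    have h3 : Filter.Tendsto
        (fun T : ℕ => (1 / (N T : ℝ)) * ∑ t ∈ Finset.range (N T), S' t m)
        Filter.atTop (nhds (z m)) := (hS' m).comp hNtop
    -- combine
    have hfinal : Filter.Tendsto
        (fun T : ℕ => ((c T : ℝ) / T) * x m
          + ((N T : ℝ) / T) * ((1 / (N T : ℝ)) * ∑ t ∈ Finset.range (N T), S' t m))
        Filter.atTop (nhds (w * x m + (1 - w) * z m)) :=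
      (h1.mul_const (x m)).add (h2.mul h3)
    apply hfinal.congr'
    filter_upwards [Filter.eventually_atTop.2 ⟨1, fun T hT => hT⟩,
      hNtop.eventually_ge_atTop 1] with T hT hNT
    have hsum := cesaro_sum_split w hw0 hw1' (x m) (fun s => S' s m) T
    have hTne : (T : ℝ) ≠ 0 := by positivity
    have hNne : (N T : ℝ) ≠ 0 := by
      have : (0:ℕ) < N T := hNT
      positivity
    simp only [hN, hc] at hNne ⊢
    simp only [apply_ite (fun f : M → ℝ => f m)]
    rw [hsum]
    field_simp

/-- For a finite set `𝒮 ⊆ ℝ^M` (with `M` finite), every point `Σ` of the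
convex hull of `𝒮` is the limit of the Cesàro averages of some sequence `S : ℕ → 𝒮`,
i.e. `(1/T) ∑_{t=0}^{T−1} S_m(t) → Σ_m` for every `m`. -/
theorem convexHull_mem_cesaro_limit {M : Type*} [Fintype M]
    (𝒮 : Finset (M → ℝ)) (Sig : M → ℝ)
    (hSig : Sig ∈ convexHull ℝ (𝒮 : Set (M → ℝ))) :
    ∃ S : ℕ → (M → ℝ), (∀ t, S t ∈ 𝒮) ∧
      ∀ m, Filter.Tendsto
        (fun T : ℕ => (1 / (T : ℝ)) * ∑ t ∈ Finset.range T, S t m)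
        Filter.atTop (nhds (Sig m)) := by
  classical
  induction 𝒮 using Finset.induction_on generalizing Sig with
  | empty => simp at hSig
  | @insert a s ha ih =>
    -- constant-sequence helper
    have hconst : ∀ (x : M → ℝ), (∀ m, Filter.Tendsto
        (fun T : ℕ => (1 / (T : ℝ)) * ∑ t ∈ Finset.range T, x m)
        Filter.atTop (nhds (x m))) := by
      intro x m
      apply Filter.Tendsto.congr' _ (tendsto_const_nhds (x := x m))
      filter_upwards [Filter.eventually_atTop.2 ⟨1, fun T hT => hT⟩] with T hT
      have hTne : (T : ℝ) ≠ 0 := by positivity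
      rw [Finset.sum_const, Finset.card_range]
      field_simp
      rw [nsmul_eq_mul, mul_comm]
    rcases s.eq_empty_or_nonempty with rfl | hs
    · simp only [insert_empty_eq, Finset.coe_singleton, convexHull_singleton,
        Set.mem_singleton_iff] at hSig
      exact ⟨fun _ => Sig, fun t => by rw [hSig]; exact Finset.mem_insert_self _ _, hconst Sig⟩
    · rw [Finset.coe_insert, convexHull_insert (Finset.coe_nonempty.mpr hs), mem_convexJoin] at hSig
      obtain ⟨x, hx, z, hz, hseg⟩ := hSig
      rw [Set.mem_singleton_iff] at hx
      subst hx
      obtain ⟨θ₁, θ₂, hθ₁, hθ₂, hsum, heq⟩ := hseg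
      obtain ⟨S', hS'mem, hS'lim⟩ := ih z hz
      by_cases hθ : θ₁ = 1
      · have hθ₂0 : θ₂ = 0 := by linarith
        have hxS : Sig = x := by
          rw [← heq, hθ, hθ₂0]; simp
        exact ⟨fun _ => Sig, fun t => by rw [hxS]; exact Finset.mem_insert_self _ _, hconst Sig⟩
      · have hθ₁lt : θ₁ < 1 := lt_of_le_of_ne (by linarith) hθ
        obtain ⟨S, hSmem, hSlim⟩ := cesaro_mix x S' z θ₁ hθ₁ hθ₁lt hS'lim
        refine ⟨S, fun t => ?_, fun m => ?_⟩
        · rcases hSmem t with h | ⟨s', h⟩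
          · rw [h]; exact Finset.mem_insert_self x s
          · rw [h]; exact Finset.mem_insert_of_mem (hS'mem s')
        · have : Sig m = θ₁ * x m + (1 - θ₁) * z m := by
            rw [← heq]
            have : θ₂ = 1 - θ₁ := by linarith
            rw [this]
            simp [Pi.add_apply, Pi.smul_apply, smul_eq_mul]
          rw [this]
          exact hSlim m
end

section
/- Let M be a finite set of movements and 𝒮 ⊆ {0,1}^M a finite set of admissible phases. Suppose o_m ≥ 1, x_m ≥ 0, c_m ≥ 0 for all m ∈ M, and there exist Σ in the convex hull of 𝒮 and ε > 0 with d̄_m ≤ c_m Σ_m − ε for all m ∈ M. If S* ∈ 𝒮 maximizes the OCC-MP pressure Σ_{m∈M} o_m x_m c_m S_m over S ∈ 𝒮, then Σ_{m∈M} o_m x_m (d̄_m − c_m S*_m) ≤ −ε Σ_{m∈M} o_m x_m ≤ −ε Σ_{m∈M} x_m. -/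
/-- With occupancies `o_m ≥ 1`, queues `x_m ≥ 0`, saturation flows
`c_m ≥ 0`, and demand in the interior of the feasible region
(`d̄_m ≤ c_m Σ_m − ε` for some `Σ ∈ co(𝒮)`, `ε > 0`), if `S* ∈ 𝒮` maximizes the
OCC-MP pressure `∑_m o_m x_m c_m S_m` over `𝒮`, then
`∑_m o_m x_m (d̄_m − c_m S*_m) ≤ −ε ∑_m o_m x_m ≤ −ε ∑_m x_m`. -/
theorem occmp_drift_bound {M : Type*} [Fintype M]
    (𝒮 : Finset (M → ℝ))
    (h01 : ∀ S ∈ 𝒮, ∀ m, S m = 0 ∨ S m = 1)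
    (o x c dbar : M → ℝ)
    (ho : ∀ m, 1 ≤ o m) (hx : ∀ m, 0 ≤ x m) (hc : ∀ m, 0 ≤ c m)
    (Sig : M → ℝ) (hSig : Sig ∈ convexHull ℝ (𝒮 : Set (M → ℝ)))
    (ε : ℝ) (hε : 0 < ε) (hfeas : ∀ m, dbar m ≤ c m * Sig m - ε)
    (Sstar : M → ℝ) (hSstar : Sstar ∈ 𝒮)
    (hmax : ∀ S ∈ 𝒮, ∑ m, o m * x m * c m * S m ≤ ∑ m, o m * x m * c m * Sstar m) :
    ∑ m, o m * x m * (dbar m - c m * Sstar m) ≤ -ε * ∑ m, o m * x m ∧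
      -ε * ∑ m, o m * x m ≤ -ε * ∑ m, x m := by
  obtain ⟨w, hw0, hw1, hwx⟩ := Finset.mem_convexHull'.mp hSig
  have hox : ∀ m, 0 ≤ o m * x m := fun m =>
    mul_nonneg (le_trans zero_le_one (ho m)) (hx m)
  -- key: ∑ o x c Sig ≤ ∑ o x c Sstar
  have key : ∑ m, o m * x m * c m * Sig m ≤ ∑ m, o m * x m * c m * Sstar m := by
    have hSigm : ∀ m, Sig m = ∑ S ∈ 𝒮, w S * S m := by
      intro m
      rw [← hwx]
      simp [Finset.sum_apply]
    calc ∑ m, o m * x m * c m * Sig m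
        = ∑ S ∈ 𝒮, w S * ∑ m, o m * x m * c m * S m := by
          simp only [hSigm, Finset.mul_sum]
          rw [Finset.sum_comm]
          congr 1; ext m; congr 1; ext S; ring
      _ ≤ ∑ S ∈ 𝒮, w S * ∑ m, o m * x m * c m * Sstar m := by
          apply Finset.sum_le_sum
          intro S hS
          exact mul_le_mul_of_nonneg_left (hmax S hS) (hw0 S hS)
      _ = ∑ m, o m * x m * c m * Sstar m := by
          rw [← Finset.sum_mul, hw1, one_mul]
  constructor
  · have h1 : ∑ m, o m * x m * (dbar m - c m * Sstar m)
        ≤ ∑ m, o m * x m * (c m * Sig m - ε - c m * Sstar m) := by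
      apply Finset.sum_le_sum
      intro m _
      apply mul_le_mul_of_nonneg_left _ (hox m)
      linarith [hfeas m]
    calc ∑ m, o m * x m * (dbar m - c m * Sstar m)
        ≤ ∑ m, o m * x m * (c m * Sig m - ε - c m * Sstar m) := h1
      _ = (∑ m, o m * x m * c m * Sig m) - (∑ m, o m * x m * c m * Sstar m)
          - ε * ∑ m, o m * x m := by
          rw [Finset.mul_sum]
          rw [← Finset.sum_sub_distrib, ← Finset.sum_sub_distrib]
          congr 1; ext m; ring
      _ ≤ -ε * ∑ m, o m * x m := by linarith
  · have : ∑ m, x m ≤ ∑ m, o m * x m := by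
      apply Finset.sum_le_sum
      intro m _
      nlinarith [ho m, hx m]
    nlinarith
end

section
/- Let M be a finite set of movements with, for each m ∈ M: occupancy 1 ≤ o_m ≤ O, demand 0 ≤ d̄_m ≤ D, mean saturation flow 0 ≤ c_m ≤ C̄, and queue x_m ≥ 0. Suppose there exist Σ in the convex hull of the finite phase set 𝒮 ⊆ {0,1}^M and ε > 0 with d̄_m ≤ c_m Σ_m − ε for all m, and let S* ∈ 𝒮 maximize Σ_m o_m x_m c_m S_m over 𝒮. Define the updated queues x'_m = x_m + d̄_m − min(c_m S*_m, x_m). Then, with the constant k = |M| · O · ((max(D, C̄))² + 2 C̄²), the occupancy-weighted quadratic Lyapunov function satisfies Σ_{m∈M} o_m (x'_m)² − Σ_{m∈M} o_m x_m² ≤ k − 2ε Σ_{m∈M} x_m. -/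
/-- One-step drift bound for the occupancy-weighted quadratic Lyapunov
function under the OCC-MP policy: with `1 ≤ o_m ≤ O`, `0 ≤ d̄_m ≤ D`, `0 ≤ c_m ≤ C̄`,
`x_m ≥ 0`, demand in the interior of the feasible region, `S*` the OCC-MP phase, and
updated queues `x'_m = x_m + d̄_m − min(c_m S*_m, x_m)`, we have
`∑ o_m (x'_m)² − ∑ o_m x_m² ≤ k − 2ε ∑ x_m` where
`k = |M| · O · ((max(D, C̄))² + 2 C̄²)`. -/
theorem occmp_lyapunov_drift {M : Type*} [Fintype M]
    (𝒮 : Finset (M → ℝ))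
    (h01 : ∀ S ∈ 𝒮, ∀ m, S m = 0 ∨ S m = 1)
    (o dbar c x : M → ℝ) (O D Cbar : ℝ)
    (ho : ∀ m, 1 ≤ o m ∧ o m ≤ O)
    (hd : ∀ m, 0 ≤ dbar m ∧ dbar m ≤ D)
    (hc : ∀ m, 0 ≤ c m ∧ c m ≤ Cbar)
    (hx : ∀ m, 0 ≤ x m)
    (Sig : M → ℝ) (hSig : Sig ∈ convexHull ℝ (𝒮 : Set (M → ℝ)))
    (ε : ℝ) (hε : 0 < ε) (hfeas : ∀ m, dbar m ≤ c m * Sig m - ε)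
    (Sstar : M → ℝ) (hSstar : Sstar ∈ 𝒮)
    (hmax : ∀ S ∈ 𝒮, ∑ m, o m * x m * c m * S m ≤ ∑ m, o m * x m * c m * Sstar m) :
    (∑ m, o m * (x m + dbar m - min (c m * Sstar m) (x m)) ^ 2)
        - ∑ m, o m * (x m) ^ 2
      ≤ (Fintype.card M : ℝ) * O * ((max D Cbar) ^ 2 + 2 * Cbar ^ 2)
          - 2 * ε * ∑ m, x m := by
  -- Step 1: the linear functional bound extends to the convex hull
  have hSigle : ∑ m, o m * x m * c m * Sig m ≤ ∑ m, o m * x m * c m * Sstar m := by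
    have hlin : IsLinearMap ℝ (fun y : M → ℝ => ∑ m, o m * x m * c m * y m) := by
      constructor
      · intro a b
        simp only [Pi.add_apply, mul_add, Finset.sum_add_distrib]
      · intro r a
        simp only [Pi.smul_apply, smul_eq_mul, Finset.mul_sum]
        exact Finset.sum_congr rfl fun m _ => by ring
    have hconv : Convex ℝ {y : M → ℝ |
        ∑ m, o m * x m * c m * y m ≤ ∑ m, o m * x m * c m * Sstar m} :=
      convex_halfSpace_le hlin _
    exact convexHull_min (fun S hS => hmax S hS) hconv hSig
  -- Step 2: pointwise drift bound
  have hmain : ∀ m, o m * (x m + dbar m - min (c m * Sstar m) (x m)) ^ 2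
      - o m * (x m) ^ 2
      ≤ O * ((max D Cbar) ^ 2 + 2 * Cbar ^ 2)
        + 2 * (o m * x m * dbar m) - 2 * (o m * x m * c m * Sstar m) := by
    intro m
    obtain ⟨ho1, hoO⟩ := ho m
    obtain ⟨hd0, hdD⟩ := hd m
    obtain ⟨hc0, hcC⟩ := hc m
    have hx0 := hx m
    have hS := h01 Sstar hSstar m
    have hcs0 : 0 ≤ c m * Sstar m := by
      rcases hS with h | h <;> rw [h] <;> simp [hc0]
    have hcsC : c m * Sstar m ≤ Cbar := by
      rcases hS with h | h <;> rw [h] <;> simp [hcC] <;> linarith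
    set s := min (c m * Sstar m) (x m) with hs
    have hs0 : 0 ≤ s := le_min hcs0 hx0
    have hsd : s ≤ c m * Sstar m := min_le_left _ _
    have hsx : s ≤ x m := min_le_right _ _
    have hC0 : (0:ℝ) ≤ Cbar := le_trans hc0 hcC
    have ha2 : (dbar m - s) ^ 2 ≤ (max D Cbar) ^ 2 := by
      have h1 : dbar m - s ≤ max D Cbar := by
        have := le_max_left D Cbar; linarith
      have h2 : -(max D Cbar) ≤ dbar m - s := by
        have h3 : s ≤ Cbar := le_trans hsd hcsC
        have := le_max_right D Cbar; linarith
      nlinarith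
    have hxs : x m * (c m * Sstar m) - x m * s ≤ Cbar ^ 2 := by
      rcases le_total (c m * Sstar m) (x m) with h | h
      · rw [hs, min_eq_left h]; nlinarith
      · rw [hs, min_eq_right h]; nlinarith
    have ho0 : (0:ℝ) ≤ o m := le_trans zero_le_one ho1
    have h1 : o m * (dbar m - s) ^ 2 ≤ O * (max D Cbar) ^ 2 := by
      have hM0 : (0:ℝ) ≤ (max D Cbar) ^ 2 := by positivity
      nlinarith [sq_nonneg (dbar m - s)]
    have h2 : o m * (x m * (c m * Sstar m) - x m * s) ≤ O * Cbar ^ 2 := by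
      have hz0 : 0 ≤ x m * (c m * Sstar m) - x m * s := by nlinarith
      nlinarith
    nlinarith [h1, h2]
  -- Step 3: feasibility gives the negative drift term
  have hd2 : ∀ m, o m * x m * dbar m ≤ o m * x m * c m * Sig m - ε * x m := by
    intro m
    obtain ⟨ho1, _⟩ := ho m
    have hx0 := hx m
    have hf := hfeas m
    have ho0 : (0:ℝ) ≤ o m * x m := mul_nonneg (le_trans zero_le_one ho1) hx0
    nlinarith [mul_le_mul_of_nonneg_left hf ho0,
      mul_nonneg (mul_nonneg hε.le hx0) (sub_nonneg.mpr ho1)]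
  have hsum2 : ∑ m, o m * x m * dbar m
      ≤ (∑ m, o m * x m * c m * Sig m) - ε * ∑ m, x m := by
    rw [Finset.mul_sum, ← Finset.sum_sub_distrib]
    exact Finset.sum_le_sum fun m _ => hd2 m
  -- Step 4: sum the pointwise bound
  have hsum : ∑ m, (o m * (x m + dbar m - min (c m * Sstar m) (x m)) ^ 2
      - o m * (x m) ^ 2)
      ≤ ∑ m, (O * ((max D Cbar) ^ 2 + 2 * Cbar ^ 2)
        + 2 * (o m * x m * dbar m) - 2 * (o m * x m * c m * Sstar m)) :=
    Finset.sum_le_sum fun m _ => hmain m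
  have hL : ∑ m, (o m * (x m + dbar m - min (c m * Sstar m) (x m)) ^ 2
      - o m * (x m) ^ 2)
      = (∑ m, o m * (x m + dbar m - min (c m * Sstar m) (x m)) ^ 2)
        - ∑ m, o m * (x m) ^ 2 := Finset.sum_sub_distrib _ _
  have hR : ∑ m, (O * ((max D Cbar) ^ 2 + 2 * Cbar ^ 2)
        + 2 * (o m * x m * dbar m) - 2 * (o m * x m * c m * Sstar m))
      = (Fintype.card M : ℝ) * (O * ((max D Cbar) ^ 2 + 2 * Cbar ^ 2))
        + 2 * (∑ m, o m * x m * dbar m)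
        - 2 * (∑ m, o m * x m * c m * Sstar m) := by
    rw [Finset.sum_sub_distrib, Finset.sum_add_distrib, Finset.sum_const,
      ← Finset.mul_sum, ← Finset.mul_sum, nsmul_eq_mul, Finset.card_univ]
  rw [hL, hR] at hsum
  linarith [hsum, hsum2, hSigle]
end
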